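/- arXiv:2511.01604 — 4 statements merged into one kernel-verified Lean document; each statement's English description precedes it below -/
import Mathlib

section
/- Let q be a prime power, F = GF(q^2). The set Ω' = {(b, c) ∈ F × F : b + b^q + c·c^q = 0 and b + b^q ≠ 0} has exactly q(q^2 − 1) elements. -/
/-! Let `σ x = x ^ q`; since `|F| = q²` it is an involutive automorphism of `F`. With
`T b = b + σ b`, a pair `(b, c)` lies in the set iff `c ≠ 0` and `T b = -c σ c`, a `σ`-fixed
element. The additive map `T` has kernel among the roots of `X^q + X` and image among the
roots of `X^q - X`, so both have at most `q` elements; as `|ker T| · |im T| = q²`, `T` maps onto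
the `σ`-fixed points with fibres of size `q`. Summing over the `q² - 1` nonzero `c` gives
`q(q² - 1)`. -/

open Polynomial

section

variable {F : Type*} [Field F] {q : ℕ} {σ : F →+* F}

lemma ncard_setOf_pow_eq_mul_le [Finite F] (hq : 2 ≤ q) (a : F) :
    {x : F | x ^ q = a * x}.ncard ≤ q := by
  classical
  have hdeg : (X ^ q - C a * X : F[X]).natDegree = q := by
    rw [natDegree_sub_eq_left_of_natDegree_lt, natDegree_X_pow]
    exact (natDegree_C_mul_le a X).trans_lt (by simp; omega)
  have hne : (X ^ q - C a * X : F[X]) ≠ 0 := by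
    intro h; rw [h, natDegree_zero] at hdeg; omega
  calc {x : F | x ^ q = a * x}.ncard
      ≤ ((X ^ q - C a * X : F[X]).roots.toFinset : Set F).ncard := by
        refine Set.ncard_le_ncard (fun x hx => ?_) (Finset.finite_toSet _)
        simp_all [sub_eq_zero]
    _ ≤ (X ^ q - C a * X : F[X]).natDegree := by
        rw [Set.ncard_coe_finset]
        exact (Multiset.toFinset_card_le _).trans (card_roots' _)
    _ = q := hdeg

lemma two_le_of_card_eq_sq [Fintype F] (hF : Fintype.card F = q ^ 2) : 2 ≤ q := by
  have := Fintype.one_lt_card (α := F)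
  by_contra! h
  interval_cases q <;> simp_all

lemma RingHom.apply_apply_of_card_eq_sq [Fintype F] (hσ : ∀ x, σ x = x ^ q)
    (hF : Fintype.card F = q ^ 2) (x : F) : σ (σ x) = x := by
  rw [hσ, hσ, ← pow_mul, ← sq, ← hF, FiniteField.pow_card]

lemma card_fixedPoints_le [Finite F] (hσ : ∀ x, σ x = x ^ q) (hq : 2 ≤ q) :
    {x : F | σ x = x}.ncard ≤ q := by
  simpa [hσ] using ncard_setOf_pow_eq_mul_le hq (1 : F)

/-- When `σ` is the `q`-power map of `GF(q^2)`, this is the trace down to `GF(q)`. -/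
def relTrace (σ : F →+* F) : F →+ F := AddMonoidHom.id F + σ.toAddMonoidHom

@[simp]
lemma relTrace_apply (σ : F →+* F) (x : F) : relTrace σ x = x + σ x := rfl

lemma card_ker_relTrace_le [Finite F] (hσ : ∀ x, σ x = x ^ q) (hq : 2 ≤ q) :
    Nat.card (relTrace σ).ker ≤ q := by
  have hker : ((relTrace σ).ker : Set F) = {x | x ^ q = -1 * x} := by
    ext x
    simp [← hσ, neg_eq_iff_add_eq_zero, eq_comm]
  rw [← SetLike.coe_sort_coe, Nat.card_coe_set_eq, hker]
  exact ncard_setOf_pow_eq_mul_le hq _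

lemma range_relTrace_subset (hinv : ∀ x, σ (σ x) = x) :
    Set.range (relTrace σ) ⊆ {x | σ x = x} := by
  rintro _ ⟨x, rfl⟩
  simp [hinv, add_comm]

lemma card_relTrace_fiber [Fintype F] (hσ : ∀ x, σ x = x ^ q) (hF : Fintype.card F = q ^ 2)
    {t : F} (ht : σ t = t) : Nat.card {b // relTrace σ b = t} = q := by
  classical
  have hq := two_le_of_card_eq_sq hF
  have hsub := range_relTrace_subset (σ.apply_apply_of_card_eq_sq hσ hF)
  have hrange : (Set.range (relTrace σ)).ncard ≤ q :=
    (Set.ncard_le_ncard hsub).trans (card_fixedPoints_le hσ hq)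
  have hker := card_ker_relTrace_le hσ hq
  have hmul : Nat.card (relTrace σ).ker * (Set.range (relTrace σ)).ncard = q * q := by
    rw [← sq, ← hF, ← Nat.card_eq_fintype_card, ← (relTrace σ).ker.card_mul_index,
      AddSubgroup.index_ker, ← AddMonoidHom.coe_range, ← Nat.card_coe_set_eq]
    rfl
  have hkerq : Nat.card (relTrace σ).ker = q := by nlinarith
  have hrangeq : (Set.range (relTrace σ)).ncard = q := by nlinarith
  have hrange_eq : Set.range (relTrace σ) = {x | σ x = x} :=
    Set.eq_of_subset_of_ncard_le hsub (hrangeq ▸ card_fixedPoints_le hσ hq)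
  rw [Nat.card_eq_fintype_card, Fintype.card_subtype,
    AddMonoidHom.card_fiber_eq_of_mem_range (relTrace σ) (hrange_eq ▸ ht) ⟨0, map_zero _⟩, ← hkerq,
    ← Fintype.card_subtype, ← Nat.card_eq_fintype_card]
  rfl

lemma card_relTrace_eq_neg_norm [Fintype F] [DecidableEq F] (hσ : ∀ x, σ x = x ^ q)
    (hF : Fintype.card F = q ^ 2) (c : F) :
    Nat.card {b // b + σ b + c * σ c = 0 ∧ b + σ b ≠ 0} = if c = 0 then 0 else q := by
  split_ifs with hc
  · simp [hc]
  have hnorm : c * σ c ≠ 0 := mul_ne_zero hc (map_ne_zero σ |>.mpr hc)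
  have hfixed : σ (-(c * σ c)) = -(c * σ c) := by
    rw [map_neg, map_mul, σ.apply_apply_of_card_eq_sq hσ hF, mul_comm]
  rw [← card_relTrace_fiber hσ hF hfixed]
  refine Nat.card_congr (Equiv.subtypeEquivRight fun b => ?_)
  rw [relTrace_apply]
  constructor
  · rintro ⟨h, -⟩
    exact eq_neg_of_add_eq_zero_left h
  · intro h
    rw [h]
    exact ⟨neg_add_cancel _, neg_ne_zero.mpr hnorm⟩

end

lemma Nat.card_subtype_prod_eq_sum {α β : Type*} [Fintype α] [Fintype β] (P : α × β → Prop) :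
    Nat.card {x // P x} = ∑ b, Nat.card {a // P (a, b)} := by
  classical
  simp only [Nat.card_eq_fintype_card, Fintype.card_subtype, Finset.card_filter,
    Fintype.sum_prod_type_right]

/-- The set `Ω' = {(b, c) : b + b^q + c c^q = 0 and b + b^q ≠ 0}` in
`GF(q^2) × GF(q^2)` has exactly `q(q^2 - 1)` elements. -/
theorem card_Omega_prime (q : ℕ) (hq : IsPrimePow q)
    (F : Type*) [Field F] [Fintype F] (hF : Fintype.card F = q ^ 2) :
    Nat.card {p : F × F //
        p.1 + p.1 ^ q + p.2 * p.2 ^ q = 0 ∧ p.1 + p.1 ^ q ≠ 0} =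
      q * (q ^ 2 - 1) := by
  classical
  obtain ⟨p, k, hp, -, rfl⟩ := hq
  have : Fact p.Prime := ⟨Nat.prime_iff.mpr hp⟩
  have : CharP F p := charP_of_card_eq_prime_pow (hF.trans (pow_mul p k 2).symm)
  have hσ : ∀ x : F, iterateFrobenius F p k x = x ^ p ^ k := iterateFrobenius_def p k
  simp only [← hσ]
  rw [Nat.card_subtype_prod_eq_sum]
  simp only [card_relTrace_eq_neg_norm hσ hF]
  simp [Finset.sum_ite, Finset.filter_ne', hF, mul_comm]
end

section
/- Let q be a prime power, F = GF(q^2), F_0 = GF(q). Suppose a, b ∈ F^× with a + a^q = 0, b + b^q ≠ 0, and let y ∈ F_0^× with y ≠ 1. If both b(b^q + a)/a ∈ F_0 and (by)((by)^q + a)/a ∈ F_0 (up to a common unit factor, i.e., their ratio y·(a + b^q·y)/(b^q + a) lies in F_0^×), then a contradiction follows; in other words, the ratio y^{-1}(b^q + a)(a + b^q y)^{-1} cannot lie in F_0^×. -/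
/-!
Write `σ` for the Frobenius `x ↦ x ^ q`, an involution of `F` fixing `F_0`. Since `σ a = -a`
and `σ y = y`, applying `σ` to `z = y⁻¹ (σ b + a) (a + σ b · y)⁻¹` gives
`σ z = y⁻¹ (b - a) (b y - a)⁻¹`. If `σ z = z ≠ 0`, cross-multiplying the two expressions
leaves `a (y - 1) (b + σ b) = 0`, which contradicts `a ≠ 0`, `y ≠ 1` and `b + σ b ≠ 0`.
-/

theorem exists_ringHom_eq_pow_of_isPrimePow {F : Type*} [Field F] [Fintype F] {q k : ℕ}
    (hq : IsPrimePow q) (hF : Fintype.card F = q ^ k) :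
    ∃ σ : F →+* F, ∀ x, σ x = x ^ q := by
  obtain ⟨p, n, hp, -, rfl⟩ := hq
  have : Fact p.Prime := ⟨hp.nat_prime⟩
  have : CharP F p := charP_of_card_eq_prime_pow (hF.trans (pow_mul p n k).symm)
  exact ⟨iterateFrobenius F p n, fun _ => rfl⟩

theorem pow_pow_eq_self_of_card_eq_sq {F : Type*} [Field F] [Fintype F] {q : ℕ}
    (hF : Fintype.card F = q ^ 2) (x : F) : (x ^ q) ^ q = x := by
  rw [← pow_mul, ← sq, ← hF, FiniteField.pow_card]

theorem add_map_eq_zero_of_map_ratio_eq {F : Type*} [Field F] (σ : F →+* F)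
    (hσ : ∀ x, σ (σ x) = x) {a b y : F} (ha0 : a ≠ 0) (ha : σ a = -a) (hy : σ y = y)
    (hy1 : y ≠ 1) (hz0 : y⁻¹ * (σ b + a) * (a + σ b * y)⁻¹ ≠ 0)
    (hz : σ (y⁻¹ * (σ b + a) * (a + σ b * y)⁻¹) = y⁻¹ * (σ b + a) * (a + σ b * y)⁻¹) :
    b + σ b = 0 := by
  have hσz : σ (y⁻¹ * (σ b + a) * (a + σ b * y)⁻¹) = y⁻¹ * (b - a) * (b * y - a)⁻¹ := by
    simp only [map_mul, map_inv₀, map_add, hσ, ha, hy]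
    ring
  have hy0 : y ≠ 0 := by rintro rfl; simp at hz0
  have hden : a + σ b * y ≠ 0 := by intro h; simp [h] at hz0
  have hden' : b * y - a ≠ 0 := by intro h; rw [hz, h] at hσz; simp [hσz] at hz0
  rw [hz, mul_assoc, mul_assoc, mul_right_inj' (inv_ne_zero hy0), ← div_eq_mul_inv,
    ← div_eq_mul_inv, div_eq_div_iff hden hden'] at hσz
  have hprod : a * (y - 1) * (b + σ b) = 0 := by linear_combination hσz
  exact (mul_eq_zero.mp hprod).resolve_left (mul_ne_zero ha0 (sub_ne_zero.mpr hy1))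

theorem ratio_not_in_F0_general (q : ℕ) (hq : IsPrimePow q)
    (F : Type*) [Field F] [Fintype F] (hF : Fintype.card F = q ^ 2)
    (a b y : F) (ha0 : a ≠ 0) (ha : a + a ^ q = 0)
    (hb : b + b ^ q ≠ 0)
    (hyF0 : y ^ q = y) (hy1 : y ≠ 1) :
    ¬ (y⁻¹ * (b ^ q + a) * (a + b ^ q * y)⁻¹ ≠ 0 ∧
       (y⁻¹ * (b ^ q + a) * (a + b ^ q * y)⁻¹) ^ q =
         y⁻¹ * (b ^ q + a) * (a + b ^ q * y)⁻¹) := by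
  rintro ⟨hz0, hz⟩
  obtain ⟨σ, hσ⟩ := exists_ringHom_eq_pow_of_isPrimePow hq hF
  have hσσ : ∀ x, σ (σ x) = x := fun x => by
    rw [hσ, hσ, pow_pow_eq_self_of_card_eq_sq hF]
  simp only [← hσ] at ha hb hyF0 hz0 hz
  exact hb <| add_map_eq_zero_of_map_ratio_eq σ hσσ ha0 (eq_neg_of_add_eq_zero_right ha) hyF0 hy1
    hz0 hz

/-- If `a + a^q = 0`, `b + b^q ≠ 0`, and `y ∈ F_0^×` with `y ≠ 1`, then the
ratio `y⁻¹ (b^q + a)(a + b^q y)⁻¹` does not lie in `F_0^×`. -/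
theorem ratio_not_in_F0 (q : ℕ) (hq : IsPrimePow q)
    (F : Type*) [Field F] [Fintype F] (hF : Fintype.card F = q ^ 2)
    (a b y : F) (ha0 : a ≠ 0) (ha : a + a ^ q = 0)
    (hb0 : b ≠ 0) (hb : b + b ^ q ≠ 0)
    (hy0 : y ≠ 0) (hyF0 : y ^ q = y) (hy1 : y ≠ 1) :
    ¬ (y⁻¹ * (b ^ q + a) * (a + b ^ q * y)⁻¹ ≠ 0 ∧
       (y⁻¹ * (b ^ q + a) * (a + b ^ q * y)⁻¹) ^ q =
         y⁻¹ * (b ^ q + a) * (a + b ^ q * y)⁻¹) :=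
  ratio_not_in_F0_general q hq F hF a b y ha0 ha hb hyF0 hy1
end

section
/- Let q be a prime power, F = GF(q^2), F_0 = GF(q). Define an equivalence on the set Ω' = {(b,c) ∈ F × F : b + b^q + c·c^q = 0 ≠ b + b^q} by (b, c) ∼ (b_1, c_1) iff b F_0^× = b_1 F_0^×. Then each equivalence class has exactly q^2 − 1 elements, and there are exactly q classes. -/
/-!
Since `|F| = q²`, the map `x ↦ x^q` is an involutive field automorphism, so the trace
`b + b^q` and the norm `c * c^q = c^(q+1)` take values in `F₀ = {t | t^q = t}`. All counts
reduce to the power maps of the cyclic group `Fˣ` of order `(q + 1)(q - 1)`: when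
`|Fˣ| = m * n`, the image of `x ↦ x^n` is the kernel of `x ↦ x^m`, and each of its fibres has
`n` elements. Hence `|F₀ˣ| = q - 1`, the norm fibres over `F₀ˣ` have `q + 1` elements, and
exactly `q - 1` units have trace zero (those with `x^(q-1) = -1`). The class of `(b, c)` is the
coset `b F₀ˣ` (on which the trace is nonzero) times the norm fibres over `-(b' + b'^q)`, so it
has `(q - 1)(q + 1)` elements; the `q(q - 1)` elements of nonzero trace fall into cosets of
size `q - 1`, which gives `q` classes.
-/

namespace IsCyclic

variable {G : Type*} [CommGroup G] [IsCyclic G] [Finite G] {m n : ℕ}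

theorem range_powMonoidHom_eq_ker_of_card_eq_mul (hG : Nat.card G = m * n) :
    (powMonoidHom n : G →* G).range = (powMonoidHom m).ker := by
  have hn : n ≠ 0 := right_ne_zero_of_mul (hG ▸ Nat.card_pos.ne')
  refine Subgroup.eq_of_le_of_card_ge ?_ ?_
  · rintro _ ⟨x, rfl⟩
    rw [MonoidHom.mem_ker, powMonoidHom_apply, powMonoidHom_apply, ← pow_mul', ← hG,
      pow_card_eq_one']
  · rw [card_powMonoidHom_range, card_powMonoidHom_ker, hG, Nat.gcd_mul_left_left,
      Nat.gcd_mul_right_left, Nat.mul_div_cancel _ (Nat.pos_of_ne_zero hn)]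

theorem card_pow_eq_of_card_eq_mul (hG : Nat.card G = m * n) {y : G} (hy : y ^ m = 1) :
    Nat.card {x : G // x ^ n = y} = n := by
  obtain ⟨x₀, rfl⟩ : y ∈ (powMonoidHom n : G →* G).range := by
    rwa [range_powMonoidHom_eq_ker_of_card_eq_mul hG]
  change Nat.card ((powMonoidHom n : G →* G) ⁻¹' {powMonoidHom n x₀}) = n
  rw [Nat.card_congr ((powMonoidHom n : G →* G).fiberEquivKer x₀), card_powMonoidHom_ker, hG,
    Nat.gcd_mul_left_left]

end IsCyclic

theorem Nat.card_eq_card_mul_of_card_fiber_eq {α β : Type*} [Finite α] [Finite β]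
    (f : α → β) {m : ℕ} (h : ∀ b, Nat.card {a // f a = b} = m) :
    Nat.card α = Nat.card β * m := by
  have := Fintype.ofFinite β
  rw [← Nat.card_congr (Equiv.sigmaFiberEquiv f), Nat.card_sigma]
  simp [h, Nat.card_eq_fintype_card]

theorem Nat.card_prod_subtype_eq_card_mul {α β : Type*} [Finite α] [Finite β] (s : Set α)
    (R : α → β → Prop) {m : ℕ} (h : ∀ a ∈ s, Nat.card {b // R a b} = m) :
    Nat.card {x : α × β // x.1 ∈ s ∧ R x.1 x.2} = Nat.card s * m := by
  have := Fintype.ofFinite s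
  let e : {x : α × β // x.1 ∈ s ∧ R x.1 x.2} ≃ Σ a : s, {b // R a b} :=
    { toFun x := ⟨⟨x.1.1, x.2.1⟩, ⟨x.1.2, x.2.2⟩⟩
      invFun y := ⟨(y.1, y.2), y.1.2, y.2.2⟩
      left_inv _ := rfl
      right_inv _ := rfl }
  rw [Nat.card_congr e, Nat.card_sigma, Finset.sum_congr rfl fun a _ => h a.1 a.2]
  simp [Nat.card_eq_fintype_card]

theorem pow_eq_self_iff_pow_pred_eq_one {G : Type*} [Group G] {n : ℕ} (hn : n ≠ 0) (x : G) :
    x ^ n = x ↔ x ^ (n - 1) = 1 := by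
  conv_lhs => rw [← Nat.sub_add_cancel (Nat.one_le_iff_ne_zero.2 hn), pow_succ]
  exact mul_eq_right

theorem Nat.card_units_subtype {G₀ : Type*} [GroupWithZero G₀] {P : G₀ → Prop}
    (h0 : ¬P 0) : Nat.card {u : G₀ˣ // P u} = Nat.card {x : G₀ // P x} :=
  Nat.card_congr <| (unitsEquivNeZero.subtypeEquiv fun _ => Iff.rfl).trans <|
    Equiv.subtypeSubtypeEquivSubtype fun hx hx0 => h0 (hx0 ▸ hx)

section CardEqSq

variable {F : Type*} [Field F] [Fintype F] {q : ℕ}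

theorem one_lt_of_card_eq_sq (hF : Fintype.card F = q ^ 2) : 1 < q :=
  (Nat.one_lt_pow_iff two_ne_zero).1 (hF ▸ Fintype.one_lt_card)

theorem add_pow_of_card_eq_sq (hF : Fintype.card F = q ^ 2) (x y : F) :
    (x + y) ^ q = x ^ q + y ^ q := by
  obtain ⟨n, hp, hcard⟩ := FiniteField.card F (ringChar F)
  obtain ⟨k, -, rfl⟩ := (Nat.dvd_prime_pow hp).1 (hcard ▸ hF ▸ dvd_pow_self q two_ne_zero)
  have := Fact.mk hp
  exact add_pow_char_pow x y _ k

theorem neg_pow_of_card_eq_sq (hF : Fintype.card F = q ^ 2) (x : F) : (-x) ^ q = -x ^ q := by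
  refine eq_neg_of_add_eq_zero_left ?_
  rw [← add_pow_of_card_eq_sq hF, neg_add_cancel, zero_pow (one_lt_of_card_eq_sq hF).ne_bot]

theorem pow_pow_of_card_eq_sq (hF : Fintype.card F = q ^ 2) (x : F) : (x ^ q) ^ q = x := by
  rw [← pow_mul, ← sq, ← hF, FiniteField.pow_card]

theorem trace_pow_of_card_eq_sq (hF : Fintype.card F = q ^ 2) (b : F) :
    (b + b ^ q) ^ q = b + b ^ q := by
  rw [add_pow_of_card_eq_sq hF, pow_pow_of_card_eq_sq hF, add_comm]

theorem card_units_of_card_eq_sq (hF : Fintype.card F = q ^ 2) :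
    Nat.card Fˣ = (q + 1) * (q - 1) := by
  rw [Nat.card_units, Nat.card_eq_fintype_card, hF, ← Nat.sq_sub_sq, one_pow]

theorem card_fixedUnits (hF : Fintype.card F = q ^ 2) :
    Nat.card {t : F // t ≠ 0 ∧ t ^ q = t} = q - 1 := by
  have hq : q ≠ 0 := (one_lt_of_card_eq_sq hF).ne_bot
  rw [← Nat.card_units_subtype (by simp), ← IsCyclic.card_pow_eq_of_card_eq_mul
    (card_units_of_card_eq_sq hF) (one_pow (q + 1))]
  refine Nat.card_congr (Equiv.subtypeEquivRight fun u => ?_)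
  rw [← pow_eq_self_iff_pow_pred_eq_one hq, Units.ext_iff, Units.val_pow_eq_pow_val]
  exact and_iff_right u.ne_zero

theorem card_norm_fiber (hF : Fintype.card F = q ^ 2) {a : F} (ha : a ≠ 0) (haq : a ^ q = a) :
    Nat.card {c : F // c * c ^ q = a} = q + 1 := by
  have hq : q ≠ 0 := (one_lt_of_card_eq_sq hF).ne_bot
  have hy : Units.mk0 a ha ^ (q - 1) = 1 := by
    rwa [← pow_eq_self_iff_pow_pred_eq_one hq, Units.ext_iff, Units.val_pow_eq_pow_val]
  rw [← Nat.card_units_subtype (by simpa using ha.symm), ← IsCyclic.card_pow_eq_of_card_eq_mul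
    ((card_units_of_card_eq_sq hF).trans (mul_comm _ _)) hy]
  refine Nat.card_congr (Equiv.subtypeEquivRight fun u => ?_)
  rw [Units.ext_iff, Units.val_pow_eq_pow_val, Units.val_mk0, pow_succ']

theorem card_trace_ne_zero (hF : Fintype.card F = q ^ 2) :
    Nat.card {b : F // b + b ^ q ≠ 0} = q * (q - 1) := by
  classical
  have hq : q ≠ 0 := (one_lt_of_card_eq_sq hF).ne_bot
  have hy : (-1 : Fˣ) ^ (q + 1) = 1 := by
    rw [Units.ext_iff, Units.val_pow_eq_pow_val, Units.val_neg, Units.val_one, pow_succ,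
      neg_pow_of_card_eq_sq hF, one_pow, neg_one_mul, neg_neg]
  have hker := IsCyclic.card_pow_eq_of_card_eq_mul (card_units_of_card_eq_sq hF) hy
  rw [← Nat.card_units_subtype (by simp [hq])]
  have : ∀ u : Fˣ, (u : F) + (u : F) ^ q ≠ 0 ↔ ¬u ^ (q - 1) = -1 := fun u => by
    have htr : (u : F) + (u : F) ^ q = u * (1 + ((u ^ (q - 1) : Fˣ) : F)) := by
      rw [Units.val_pow_eq_pow_val, mul_one_add, ← pow_succ',
        Nat.sub_add_cancel (Nat.one_le_iff_ne_zero.2 hq)]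
    rw [htr, Ne, mul_eq_zero, not_or, and_iff_right u.ne_zero, add_eq_zero_iff_neg_eq,
      Units.ext_iff, Units.val_neg, Units.val_one, eq_comm]
  rw [Nat.card_congr (Equiv.subtypeEquivRight this), Nat.card_eq_fintype_card,
    Fintype.card_subtype_compl, ← Nat.card_eq_fintype_card, ← Nat.card_eq_fintype_card,
    card_units_of_card_eq_sq hF, hker, add_one_mul, Nat.add_sub_cancel]

theorem ne_zero_of_trace_ne_zero (hF : Fintype.card F = q ^ 2) {b : F} (hb : b + b ^ q ≠ 0) :
    b ≠ 0 := by
  rintro rfl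
  exact (one_lt_of_card_eq_sq hF).ne_bot (by simpa using hb)

theorem card_norm_eq_neg_trace (hF : Fintype.card F = q ^ 2) {b : F} (hb : b + b ^ q ≠ 0) :
    Nat.card {c : F // c * c ^ q = -(b + b ^ q)} = q + 1 :=
  card_norm_fiber hF (neg_ne_zero.2 hb)
    (by rw [neg_pow_of_card_eq_sq hF, trace_pow_of_card_eq_sq hF])

theorem exists_norm_eq_neg_trace (hF : Fintype.card F = q ^ 2) {b : F} (hb : b + b ^ q ≠ 0) :
    ∃ c : F, c * c ^ q = -(b + b ^ q) := by
  obtain ⟨⟨c, hc⟩⟩ := (Nat.card_pos_iff.1 (by rw [card_norm_eq_neg_trace hF hb]; omega)).1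
  exact ⟨c, hc⟩

end CardEqSq

section Classes

variable {F : Type*} [Field F] {q : ℕ}

/-- The coset `b F₀ˣ`, where `F₀ = {t | t ^ q = t}`. -/
def fixedUnitsCoset (q : ℕ) (b : F) : Set F :=
  {b' | ∃ t : F, t ≠ 0 ∧ t ^ q = t ∧ b' = b * t}

theorem mem_fixedUnitsCoset_self (b : F) : b ∈ fixedUnitsCoset q b :=
  ⟨1, one_ne_zero, one_pow q, (mul_one b).symm⟩

theorem fixedUnitsCoset_eq_of_mem {b b₀ : F} (h : b ∈ fixedUnitsCoset q b₀) :
    fixedUnitsCoset q b = fixedUnitsCoset q b₀ := by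
  obtain ⟨t, ht0, htq, rfl⟩ := h
  ext b'
  constructor
  · rintro ⟨s, hs0, hsq, rfl⟩
    exact ⟨t * s, mul_ne_zero ht0 hs0, by rw [mul_pow, htq, hsq], mul_assoc _ _ _⟩
  · rintro ⟨s, hs0, hsq, rfl⟩
    refine ⟨t⁻¹ * s, mul_ne_zero (inv_ne_zero ht0) hs0, by rw [mul_pow, inv_pow, htq, hsq],
      by field_simp⟩

theorem card_fixedUnitsCoset [Fintype F] (hF : Fintype.card F = q ^ 2) {b : F} (hb : b ≠ 0) :
    Nat.card (fixedUnitsCoset q b) = q - 1 := by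
  have : fixedUnitsCoset q b = (b * ·) '' {t | t ≠ 0 ∧ t ^ q = t} := by
    ext b'
    simp [fixedUnitsCoset, and_assoc, eq_comm]
  rw [this, Nat.card_image_of_injective (mul_right_injective₀ hb)]
  exact card_fixedUnits hF

theorem trace_mul_of_pow_eq {t : F} (ht : t ^ q = t) (b : F) :
    b * t + (b * t) ^ q = t * (b + b ^ q) := by
  rw [mul_pow, ht]
  ring

theorem trace_ne_zero_of_mem_fixedUnitsCoset {b b₀ : F} (hb₀ : b₀ + b₀ ^ q ≠ 0)
    (h : b ∈ fixedUnitsCoset q b₀) : b + b ^ q ≠ 0 := by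
  obtain ⟨t, ht0, htq, rfl⟩ := h
  rw [trace_mul_of_pow_eq htq]
  exact mul_ne_zero ht0 hb₀

def omegaPrime (q : ℕ) : Set (F × F) :=
  {p | p.1 + p.1 ^ q + p.2 * p.2 ^ q = 0 ∧ p.1 + p.1 ^ q ≠ 0}

/-- The class of any `(b, c) ∈ Ω'`: it depends on `b` only. -/
def omegaClass (q : ℕ) (b : F) : Set (F × F) :=
  {p | p ∈ omegaPrime q ∧ p.1 ∈ fixedUnitsCoset q b}

theorem omegaClass_eq {b : F} (hb : b + b ^ q ≠ 0) :
    omegaClass q b = {p | p.1 ∈ fixedUnitsCoset q b ∧ p.2 * p.2 ^ q = -(p.1 + p.1 ^ q)} := by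
  ext ⟨b', c⟩
  simp only [omegaClass, omegaPrime, Set.mem_ofPred_eq]
  constructor
  · rintro ⟨⟨h, -⟩, hb'⟩
    exact ⟨hb', by linear_combination h⟩
  · rintro ⟨hb', h⟩
    exact ⟨⟨by linear_combination h, trace_ne_zero_of_mem_fixedUnitsCoset hb hb'⟩, hb'⟩

variable [Fintype F]

theorem card_omegaClass (hF : Fintype.card F = q ^ 2) {b : F} (hb : b + b ^ q ≠ 0) :
    Nat.card (omegaClass q b) = q ^ 2 - 1 := by
  rw [omegaClass_eq hb]
  refine (Nat.card_prod_subtype_eq_card_mul (fixedUnitsCoset q b)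
    (fun b' c => c * c ^ q = -(b' + b' ^ q)) (m := q + 1) ?_).trans ?_
  · exact fun b' hb' =>
      card_norm_eq_neg_trace hF (trace_ne_zero_of_mem_fixedUnitsCoset hb hb')
  · rw [card_fixedUnitsCoset hF (ne_zero_of_trace_ne_zero hF hb), mul_comm, ← Nat.sq_sub_sq,
      one_pow]

theorem omegaClass_eq_omegaClass_iff (hF : Fintype.card F = q ^ 2) {b b₀ : F}
    (hb : b + b ^ q ≠ 0) :
    omegaClass q b = omegaClass q b₀ ↔ b ∈ fixedUnitsCoset q b₀ := by
  constructor
  · intro h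
    obtain ⟨c, hc⟩ := exists_norm_eq_neg_trace hF hb
    have hmem : (b, c) ∈ omegaClass q b :=
      ⟨⟨by linear_combination hc, hb⟩, mem_fixedUnitsCoset_self b⟩
    exact (h ▸ hmem).2
  · intro h
    unfold omegaClass
    rw [fixedUnitsCoset_eq_of_mem h]

theorem card_omegaClasses (hF : Fintype.card F = q ^ 2) :
    Nat.card {s : Set (F × F) // ∃ p ∈ omegaPrime q, s = omegaClass q p.1} = q := by
  let cls (b : {b : F // b + b ^ q ≠ 0}) :
      {s : Set (F × F) // ∃ p ∈ omegaPrime q, s = omegaClass q p.1} :=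
    ⟨omegaClass q b, (b, (exists_norm_eq_neg_trace hF b.2).choose),
      ⟨by linear_combination (exists_norm_eq_neg_trace hF b.2).choose_spec, b.2⟩, rfl⟩
  have hfiber (s) : Nat.card {b // cls b = s} = q - 1 := by
    obtain ⟨_, ⟨b₀, c₀⟩, ⟨-, hb₀⟩, rfl⟩ := s
    rw [← card_fixedUnitsCoset hF (ne_zero_of_trace_ne_zero hF hb₀)]
    refine Nat.card_congr <| (Equiv.subtypeEquivRight fun b => ?_).trans <|
      Equiv.subtypeSubtypeEquivSubtype (trace_ne_zero_of_mem_fixedUnitsCoset hb₀)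
    exact Subtype.ext_iff.trans (omegaClass_eq_omegaClass_iff hF b.2)
  have hcard := Nat.card_eq_card_mul_of_card_fiber_eq cls hfiber
  rw [card_trace_ne_zero hF] at hcard
  exact (Nat.eq_of_mul_eq_mul_right (by have := one_lt_of_card_eq_sq hF; omega) hcard).symm

end Classes

theorem Omega_prime_classes_general (q : ℕ)
    (F : Type*) [Field F] [Fintype F] (hF : Fintype.card F = q ^ 2) :
    (∀ p : F × F,
      p.1 + p.1 ^ q + p.2 * p.2 ^ q = 0 → p.1 + p.1 ^ q ≠ 0 →
      Nat.card {p' : F × F //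
          (p'.1 + p'.1 ^ q + p'.2 * p'.2 ^ q = 0 ∧ p'.1 + p'.1 ^ q ≠ 0) ∧
          ∃ t : F, t ≠ 0 ∧ t ^ q = t ∧ p'.1 = p.1 * t} = q ^ 2 - 1) ∧
    Nat.card {s : Set (F × F) // ∃ p : F × F,
        (p.1 + p.1 ^ q + p.2 * p.2 ^ q = 0 ∧ p.1 + p.1 ^ q ≠ 0) ∧
        s = {p' : F × F |
          (p'.1 + p'.1 ^ q + p'.2 * p'.2 ^ q = 0 ∧ p'.1 + p'.1 ^ q ≠ 0) ∧
          ∃ t : F, t ≠ 0 ∧ t ^ q = t ∧ p'.1 = p.1 * t}} = q :=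
  ⟨fun _ _ hb => card_omegaClass hF hb, card_omegaClasses hF⟩

/-- Partition `Ω' = {(b,c) : b + b^q + c c^q = 0 ≠ b + b^q}` by the relation
`(b,c) ∼ (b₁,c₁) ↔ b F_0^× = b₁ F_0^×`. Each equivalence class has exactly
`q^2 - 1` elements and there are exactly `q` classes. -/
theorem Omega_prime_classes (q : ℕ) (hq : IsPrimePow q)
    (F : Type*) [Field F] [Fintype F] (hF : Fintype.card F = q ^ 2) :
    (∀ p : F × F,
      p.1 + p.1 ^ q + p.2 * p.2 ^ q = 0 → p.1 + p.1 ^ q ≠ 0 →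
      Nat.card {p' : F × F //
          (p'.1 + p'.1 ^ q + p'.2 * p'.2 ^ q = 0 ∧ p'.1 + p'.1 ^ q ≠ 0) ∧
          ∃ t : F, t ≠ 0 ∧ t ^ q = t ∧ p'.1 = p.1 * t} = q ^ 2 - 1) ∧
    Nat.card {s : Set (F × F) // ∃ p : F × F,
        (p.1 + p.1 ^ q + p.2 * p.2 ^ q = 0 ∧ p.1 + p.1 ^ q ≠ 0) ∧
        s = {p' : F × F |
          (p'.1 + p'.1 ^ q + p'.2 * p'.2 ^ q = 0 ∧ p'.1 + p'.1 ^ q ≠ 0) ∧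
          ∃ t : F, t ≠ 0 ∧ t ^ q = t ∧ p'.1 = p.1 * t}} = q :=
  Omega_prime_classes_general q F hF
end

section
/- Let q be a prime power, F = GF(q^2), F_0 = GF(q). Fix a ∈ F^× with a + a^q = 0, and fix b, c ∈ F with b + b^q + c·c^q = 0 and b + b^q ≠ 0, and fix b_i, b_j ∈ F^× such that b_j(b^q + a)^{-1} ∈ F_0^× and b_i·b·(b^q + a)·a^{-1} ∈ F_0^×. Then the set of pairs (d, e) with d ∈ b·F_0^×, d + d^q + e·e^q = 0, b_j(d^q + a)^{-1} ∈ F_0^×, and b_i·d·(d^q + a)·a^{-1} ∈ F_0^× has exactly q + 1 elements, namely the pairs (b, e) with e·e^q = c·c^q. -/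
/-!
Write `F_0^×` for the nonzero elements fixed by `x ↦ x^q`. If `b_j (d^q + a)⁻¹` and
`b_j (b^q + a)⁻¹` both lie in `F_0^×`, so does their ratio; for `d = b y` with `y ∈ F_0^×`
this says `a (b + b^q) (y - 1) = 0`, forcing `d = b`. What remains is `e^{q+1} = c^{q+1}`,
which has `q + 1` solutions because `q + 1` divides `|F^×| = q^2 - 1`, so that `F` contains a
primitive `(q + 1)`-st root of unity.
-/

open Polynomial

theorem IsPrimitiveRoot.natCard_pow_eq_pow {R : Type*} [CommRing R] [IsDomain R] {ζ c : R}
    {n : ℕ} (hζ : IsPrimitiveRoot ζ n) (hn : 0 < n) (hc : c ≠ 0) :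
    Nat.card {x : R // x ^ n = c ^ n} = n := by
  classical
  calc Nat.card {x : R // x ^ n = c ^ n}
      = Nat.card (nthRootsFinset n (c ^ n)) :=
        Nat.card_congr (Equiv.subtypeEquivRight fun x => (Polynomial.mem_nthRootsFinset hn _).symm)
    _ = Multiset.card (nthRoots n (c ^ n)) := by
        rw [Nat.card_eq_finsetCard, nthRootsFinset_def,
          Multiset.toFinset_card_of_nodup (hζ.nthRoots_nodup (pow_ne_zero n hc))]
    _ = n := by rw [hζ.card_nthRoots, if_pos ⟨c, rfl⟩]

theorem pow_mul_eq_pow_mul_of_mul_inv_pow_eq_self {K : Type*} [Field K] {n : ℕ} {x u v : K}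
    (hu : x * u⁻¹ ≠ 0) (hu' : (x * u⁻¹) ^ n = x * u⁻¹)
    (hv : x * v⁻¹ ≠ 0) (hv' : (x * v⁻¹) ^ n = x * v⁻¹) :
    u ^ n * v = v ^ n * u := by
  have hx : x ≠ 0 := left_ne_zero_of_mul hu
  have hu0 : u ≠ 0 := by simpa using right_ne_zero_of_mul hu
  have hv0 : v ≠ 0 := by simpa using right_ne_zero_of_mul hv
  rw [mul_pow, inv_pow] at hu' hv'
  field_simp at hu' hv'
  apply mul_left_cancel₀ hx
  linear_combination u * hv' - v * hu'

namespace FiniteField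

variable {F : Type*} [Field F] [Fintype F] {q : ℕ}

theorem exists_isPrimitiveRoot_of_dvd_card_sub_one {n : ℕ} (hn : n ∣ Fintype.card F - 1) :
    ∃ ζ : F, IsPrimitiveRoot ζ n := by
  classical
  obtain ⟨g, hg⟩ := IsCyclic.exists_ofOrder_eq_natCard (α := Fˣ)
  rw [Nat.card_eq_fintype_card, Fintype.card_units] at hg
  obtain ⟨k, hk⟩ := hn
  have hpos : 0 < Fintype.card F - 1 := Nat.sub_pos_of_lt Fintype.one_lt_card
  have hgen : IsPrimitiveRoot g (Fintype.card F - 1) := hg ▸ IsPrimitiveRoot.orderOf g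
  exact ⟨(g ^ k : Fˣ), IsPrimitiveRoot.coe_units_iff.mpr (hgen.pow hpos (by rw [hk, mul_comm]))⟩

theorem add_pow_of_card_eq_sq (hF : Fintype.card F = q ^ 2) (x y : F) :
    (x + y) ^ q = x ^ q + y ^ q := by
  obtain ⟨p, hchar, m, hp, hcard⟩ := FiniteField.card' F
  have : Fact p.Prime := ⟨hp⟩
  obtain ⟨i, -, rfl⟩ := (Nat.dvd_prime_pow hp).mp (show q ∣ p ^ (m : ℕ) from
    hcard ▸ hF ▸ dvd_pow_self q two_ne_zero)
  exact add_pow_char_pow x y p i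

theorem pow_pow_of_card_eq_sq (hF : Fintype.card F = q ^ 2) (x : F) : (x ^ q) ^ q = x := by
  rw [← pow_mul, ← sq, ← hF, FiniteField.pow_card]

theorem natCard_mul_pow_eq (hF : Fintype.card F = q ^ 2) {c : F} (hc : c ≠ 0) :
    Nat.card {e : F // e * e ^ q = c * c ^ q} = q + 1 := by
  obtain ⟨ζ, hζ⟩ := exists_isPrimitiveRoot_of_dvd_card_sub_one (F := F) (n := q + 1)
    ⟨q - 1, by rw [hF]; simpa using Nat.sq_sub_sq q 1⟩
  simp only [← pow_succ']
  exact hζ.natCard_pow_eq_pow q.succ_pos hc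

variable {a b c bi bj y : F}

theorem eq_one_of_mul_inv_fixed (hF : Fintype.card F = q ^ 2) (ha0 : a ≠ 0)
    (ha : a + a ^ q = 0) (hb : b + b ^ q ≠ 0) (hy : y ^ q = y)
    (hj : bj * (b ^ q + a)⁻¹ ≠ 0 ∧ (bj * (b ^ q + a)⁻¹) ^ q = bj * (b ^ q + a)⁻¹)
    (hjy : bj * ((b * y) ^ q + a)⁻¹ ≠ 0 ∧
      (bj * ((b * y) ^ q + a)⁻¹) ^ q = bj * ((b * y) ^ q + a)⁻¹) :
    y = 1 := by
  rw [mul_pow, hy] at hjy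
  have hratio := pow_mul_eq_pow_mul_of_mul_inv_pow_eq_self hjy.1 hjy.2 hj.1 hj.2
  have haq : a ^ q = -a := by linear_combination ha
  have hconj (z : F) (hz : z ^ q = z) : (b ^ q * z + a) ^ q = b * z - a := by
    rw [add_pow_of_card_eq_sq hF, mul_pow, pow_pow_of_card_eq_sq hF, hz, haq, sub_eq_add_neg]
  rw [hconj y hy, ← mul_one (b ^ q), hconj 1 (one_pow q)] at hratio
  have hfactor : a * (b + b ^ q) * (y - 1) = 0 := by linear_combination hratio
  simpa [ha0, hb, sub_eq_zero] using hfactor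

theorem intersection_conditions_iff (hF : Fintype.card F = q ^ 2) (ha0 : a ≠ 0)
    (ha : a + a ^ q = 0) (hbc : b + b ^ q + c * c ^ q = 0) (hb : b + b ^ q ≠ 0)
    (hj : bj * (b ^ q + a)⁻¹ ≠ 0 ∧ (bj * (b ^ q + a)⁻¹) ^ q = bj * (b ^ q + a)⁻¹)
    (hi : bi * b * (b ^ q + a) * a⁻¹ ≠ 0 ∧
      (bi * b * (b ^ q + a) * a⁻¹) ^ q = bi * b * (b ^ q + a) * a⁻¹) (d e : F) :
    ((∃ y : F, y ≠ 0 ∧ y ^ q = y ∧ d = b * y) ∧ d + d ^ q + e * e ^ q = 0 ∧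
      (bj * (d ^ q + a)⁻¹ ≠ 0 ∧ (bj * (d ^ q + a)⁻¹) ^ q = bj * (d ^ q + a)⁻¹) ∧
      (bi * d * (d ^ q + a) * a⁻¹ ≠ 0 ∧
        (bi * d * (d ^ q + a) * a⁻¹) ^ q = bi * d * (d ^ q + a) * a⁻¹)) ↔
      d = b ∧ e * e ^ q = c * c ^ q := by
  constructor
  · rintro ⟨⟨y, -, hy, rfl⟩, hnorm, hjy, -⟩
    obtain rfl := eq_one_of_mul_inv_fixed hF ha0 ha hb hy hj hjy
    rw [mul_one] at hnorm ⊢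
    exact ⟨rfl, by linear_combination hnorm - hbc⟩
  · rintro ⟨rfl, he⟩
    exact ⟨⟨1, one_ne_zero, one_pow q, (mul_one d).symm⟩, by linear_combination hbc + he, hj, hi⟩

end FiniteField

open FiniteField in
theorem intersection_number_count_general (q : ℕ)
    (F : Type*) [Field F] [Fintype F] (hF : Fintype.card F = q ^ 2)
    (a b c bi bj : F) (ha0 : a ≠ 0) (ha : a + a ^ q = 0)
    (hbc : b + b ^ q + c * c ^ q = 0) (hb : b + b ^ q ≠ 0)
    (hj : bj * (b ^ q + a)⁻¹ ≠ 0 ∧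
      (bj * (b ^ q + a)⁻¹) ^ q = bj * (b ^ q + a)⁻¹)
    (hi : bi * b * (b ^ q + a) * a⁻¹ ≠ 0 ∧
      (bi * b * (b ^ q + a) * a⁻¹) ^ q = bi * b * (b ^ q + a) * a⁻¹) :
    {p : F × F | (∃ y : F, y ≠ 0 ∧ y ^ q = y ∧ p.1 = b * y) ∧
        p.1 + p.1 ^ q + p.2 * p.2 ^ q = 0 ∧
        (bj * (p.1 ^ q + a)⁻¹ ≠ 0 ∧
          (bj * (p.1 ^ q + a)⁻¹) ^ q = bj * (p.1 ^ q + a)⁻¹) ∧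
        (bi * p.1 * (p.1 ^ q + a) * a⁻¹ ≠ 0 ∧
          (bi * p.1 * (p.1 ^ q + a) * a⁻¹) ^ q =
            bi * p.1 * (p.1 ^ q + a) * a⁻¹)} =
      {p : F × F | p.1 = b ∧ p.2 * p.2 ^ q = c * c ^ q} ∧
    Nat.card {p : F × F // (∃ y : F, y ≠ 0 ∧ y ^ q = y ∧ p.1 = b * y) ∧
        p.1 + p.1 ^ q + p.2 * p.2 ^ q = 0 ∧
        (bj * (p.1 ^ q + a)⁻¹ ≠ 0 ∧
          (bj * (p.1 ^ q + a)⁻¹) ^ q = bj * (p.1 ^ q + a)⁻¹) ∧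
        (bi * p.1 * (p.1 ^ q + a) * a⁻¹ ≠ 0 ∧
          (bi * p.1 * (p.1 ^ q + a) * a⁻¹) ^ q =
            bi * p.1 * (p.1 ^ q + a) * a⁻¹)} = q + 1 := by
  have hmem (p : F × F) := intersection_conditions_iff hF ha0 ha hbc hb hj hi p.1 p.2
  have hc : c ≠ 0 := by
    rintro rfl
    exact hb (by simpa using hbc)
  refine ⟨Set.ext hmem, ?_⟩
  rw [Nat.card_congr (Equiv.subtypeEquivRight hmem), ← natCard_mul_pow_eq hF hc]
  exact Nat.card_congr
    { toFun := fun p => ⟨p.1.2, p.2.2⟩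
      invFun := fun e => ⟨(b, e.1), rfl, e.2⟩
      left_inv := fun p => Subtype.ext (Prod.ext p.2.1.symm rfl)
      right_inv := fun _ => rfl }

/-- The counting step for the intersection number `p_{ijk}^4 = q + 1`: under
the stated conditions, the set of pairs `(d, e)` with `d ∈ b F_0^×`,
`d + d^q + e e^q = 0`, `b_j (d^q + a)⁻¹ ∈ F_0^×`, and
`b_i d (d^q + a) a⁻¹ ∈ F_0^×` equals `{(b, e) : e e^q = c c^q}` and has
exactly `q + 1` elements. -/
theorem intersection_number_count (q : ℕ) (hq : IsPrimePow q)
    (F : Type*) [Field F] [Fintype F] (hF : Fintype.card F = q ^ 2)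
    (a b c bi bj : F) (ha0 : a ≠ 0) (ha : a + a ^ q = 0)
    (hbc : b + b ^ q + c * c ^ q = 0) (hb : b + b ^ q ≠ 0)
    (hbi : bi ≠ 0) (hbj : bj ≠ 0)
    (hj : bj * (b ^ q + a)⁻¹ ≠ 0 ∧
      (bj * (b ^ q + a)⁻¹) ^ q = bj * (b ^ q + a)⁻¹)
    (hi : bi * b * (b ^ q + a) * a⁻¹ ≠ 0 ∧
      (bi * b * (b ^ q + a) * a⁻¹) ^ q = bi * b * (b ^ q + a) * a⁻¹) :
    {p : F × F | (∃ y : F, y ≠ 0 ∧ y ^ q = y ∧ p.1 = b * y) ∧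
        p.1 + p.1 ^ q + p.2 * p.2 ^ q = 0 ∧
        (bj * (p.1 ^ q + a)⁻¹ ≠ 0 ∧
          (bj * (p.1 ^ q + a)⁻¹) ^ q = bj * (p.1 ^ q + a)⁻¹) ∧
        (bi * p.1 * (p.1 ^ q + a) * a⁻¹ ≠ 0 ∧
          (bi * p.1 * (p.1 ^ q + a) * a⁻¹) ^ q =
            bi * p.1 * (p.1 ^ q + a) * a⁻¹)} =
      {p : F × F | p.1 = b ∧ p.2 * p.2 ^ q = c * c ^ q} ∧
    Nat.card {p : F × F // (∃ y : F, y ≠ 0 ∧ y ^ q = y ∧ p.1 = b * y) ∧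
        p.1 + p.1 ^ q + p.2 * p.2 ^ q = 0 ∧
        (bj * (p.1 ^ q + a)⁻¹ ≠ 0 ∧
          (bj * (p.1 ^ q + a)⁻¹) ^ q = bj * (p.1 ^ q + a)⁻¹) ∧
        (bi * p.1 * (p.1 ^ q + a) * a⁻¹ ≠ 0 ∧
          (bi * p.1 * (p.1 ^ q + a) * a⁻¹) ^ q =
            bi * p.1 * (p.1 ^ q + a) * a⁻¹)} = q + 1 :=
  intersection_number_count_general q F hF a b c bi bj ha0 ha hbc hb hj hi
end
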